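/- Let G be a non-complete finite simple graph, with G' as in the matching-plus-clique construction. Then the restriction map sending an automorphism of G' to its restriction on the original vertex set V is a well-defined injective group homomorphism Aut(G') → Aut(G). -/

import Mathlib

open SimpleGraph

/-- Matching-plus-clique extension: old vertices `Sum.inl v`, new clique vertices `Sum.inr v`,
with `Sum.inr v` the matching partner of `Sum.inl v`. -/
def ext {V : Type*} (G : SimpleGraph V) : SimpleGraph (V ⊕ V) where
  Adj x y :=
    match x, y with
    | Sum.inl a, Sum.inl b => G.Adj a b
    | Sum.inr a, Sum.inr b => a ≠ b
    | Sum.inl a, Sum.inr b => a = b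
    | Sum.inr a, Sum.inl b => a = b
  symm := by
    constructor
    rintro (a | a) (b | b) h <;> simp_all
    · exact h.symm
    · exact fun e => h e.symm
  loopless := by
    constructor
    rintro (a | a) h <;> simp_all

instance {V : Type*} (G : SimpleGraph V) [DecidableEq V] [DecidableRel G.Adj] :
    DecidableRel (ext G).Adj
  | Sum.inl a, Sum.inl b => inferInstanceAs (Decidable (G.Adj a b))
  | Sum.inl a, Sum.inr b => inferInstanceAs (Decidable (a = b))
  | Sum.inr a, Sum.inl b => inferInstanceAs (Decidable (a = b))
  | Sum.inr a, Sum.inr b => inferInstanceAs (Decidable (a ≠ b))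

instance {V : Type*} (G : SimpleGraph V) : Group (G ≃g G) where
  mul a b := b.trans a
  one := SimpleGraph.Iso.refl
  inv := SimpleGraph.Iso.symm
  mul_assoc a b c := rfl
  one_mul a := rfl
  mul_one a := rfl
  inv_mul_cancel a := by
    have : a.trans a.symm = SimpleGraph.Iso.refl := by
      ext v
      exact a.toEquiv.symm_apply_apply v
    exact this

/-!
An automorphism of `ext G` maps the clique `V'` on the new vertices to an `n`-clique, and `V'` is
the only one: a clique containing an old vertex `v` and a new vertex lies in `{v, v'}`, too small
as `n ≥ 3`, while an `n`-clique of old vertices is all of `V`, forcing `G` to be complete.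
So automorphisms preserve both `V` and `V'` and restrict to automorphisms of `G`; the restriction
is injective because the image of `v'` is forced to be the matching partner of the image of `v`.
-/

open Sum

section
variable {V : Type*} {G : SimpleGraph V}

@[simp] lemma ext_adj_inl_inl {a b : V} : (ext G).Adj (inl a) (inl b) ↔ G.Adj a b := Iff.rfl
@[simp] lemma ext_adj_inl_inr {a b : V} : (ext G).Adj (inl a) (inr b) ↔ a = b := Iff.rfl
@[simp] lemma ext_adj_inr_inl {a b : V} : (ext G).Adj (inr a) (inl b) ↔ a = b := Iff.rfl

lemma ext_isClique_subset_pair {s : Set (V ⊕ V)} (hs : (ext G).IsClique s) {a b : V}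
    (ha : inl a ∈ s) (hb : inr b ∈ s) : s ⊆ {inl a, inr a} := by
  obtain rfl : a = b := ext_adj_inl_inr.mp (hs ha hb inl_ne_inr)
  rintro (w | w) hw
  · by_contra hne
    have hwa : w ≠ a := by rintro rfl; simp at hne
    exact hwa (ext_adj_inl_inr.mp (hs hw hb inl_ne_inr))
  · by_contra hne
    have hwa : w ≠ a := by rintro rfl; simp at hne
    exact hwa (ext_adj_inr_inl.mp (hs hw ha inr_ne_inl))

lemma ext_inl_notMem_of_isNClique [Fintype V] (hn : 3 ≤ Fintype.card V) (hG : G ≠ ⊤)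
    {s : Finset (V ⊕ V)} (hs : (ext G).IsNClique (Fintype.card V) s) (a : V) : inl a ∉ s := by
  classical
  intro ha
  by_cases hb : ∃ b, inr b ∈ s
  · obtain ⟨b, hb⟩ := hb
    have hsub : s ⊆ {inl a, inr a} := by
      simpa [← Finset.coe_subset] using ext_isClique_subset_pair hs.isClique ha hb
    have := (Finset.card_le_card hsub).trans Finset.card_le_two
    have := hs.card_eq
    omega
  · push Not at hb
    have hsub : s ⊆ Finset.univ.map .inl := by
      rintro (w | w) hw
      · simp
      · exact absurd hw (hb w)
    have hs_eq : s = Finset.univ.map .inl :=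
      Finset.eq_of_subset_of_card_le hsub (by simp [hs.card_eq])
    refine hG (isClique_univ.mp fun u _ v _ huv => ?_)
    have hu : inl u ∈ (s : Set (V ⊕ V)) := by simp [hs_eq]
    have hv : inl v ∈ (s : Set (V ⊕ V)) := by simp [hs_eq]
    simpa using hs.isClique hu hv (by simpa using huv)

def extInrCopy (G : SimpleGraph V) : Copy (⊤ : SimpleGraph V) (ext G) :=
  Hom.toCopy ⟨inr, fun h => h⟩ inr_injective

lemma ext_iso_exists_apply_inr [Fintype V] (hn : 3 ≤ Fintype.card V) (hG : G ≠ ⊤)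
    (φ : ext G ≃g ext G) (v : V) : ∃ w, φ (inr v) = inr w := by
  have hs := isNClique_map_copy_top (φ.toCopy.comp (extInrCopy G))
  have hv : φ (inr v) ∈ Finset.univ.map (φ.toCopy.comp (extInrCopy G)).toEmbedding := by
    simpa [Copy.toEmbedding, extInrCopy] using ⟨v, rfl⟩
  cases h : φ (inr v) with
  | inl a => exact absurd (h ▸ hv) (ext_inl_notMem_of_isNClique hn hG hs a)
  | inr w => exact ⟨w, rfl⟩

lemma ext_iso_exists_apply_inl [Fintype V] (hn : 3 ≤ Fintype.card V) (hG : G ≠ ⊤)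
    (φ : ext G ≃g ext G) (v : V) : ∃ w, φ (inl v) = inl w := by
  cases h : φ (inl v) with
  | inl w => exact ⟨w, rfl⟩
  | inr w =>
    obtain ⟨u, hu⟩ := ext_iso_exists_apply_inr hn hG φ.symm w
    rw [← h, φ.symm_apply_apply] at hu
    exact absurd hu inl_ne_inr

/-- The `inr` branch is junk; when `3 ≤ card V` and `G ≠ ⊤` it never occurs (`inl_extRestrict`). -/
def extRestrict (φ : ext G ≃g ext G) (v : V) : V := (φ (inl v)).elim id id

lemma inl_extRestrict [Fintype V] (hn : 3 ≤ Fintype.card V) (hG : G ≠ ⊤)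
    (φ : ext G ≃g ext G) (v : V) : inl (extRestrict φ v) = φ (inl v) := by
  obtain ⟨w, hw⟩ := ext_iso_exists_apply_inl hn hG φ v
  simp [extRestrict, hw]

lemma ext_iso_apply_inr [Fintype V] (hn : 3 ≤ Fintype.card V) (hG : G ≠ ⊤)
    (φ : ext G ≃g ext G) (v : V) : φ (inr v) = inr (extRestrict φ v) := by
  obtain ⟨w, hw⟩ := ext_iso_exists_apply_inr hn hG φ v
  have hadj : (ext G).Adj (φ (inl v)) (φ (inr v)) := φ.map_adj_iff.mpr (ext_adj_inl_inr.mpr rfl)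
  rw [← inl_extRestrict hn hG, hw, ext_adj_inl_inr] at hadj
  rw [hw, hadj]

lemma extRestrict_mul [Fintype V] (hn : 3 ≤ Fintype.card V) (hG : G ≠ ⊤)
    (φ ψ : ext G ≃g ext G) (v : V) :
    extRestrict (φ * ψ) v = extRestrict φ (extRestrict ψ v) :=
  inl_injective <| by
    rw [inl_extRestrict hn hG, inl_extRestrict hn hG, inl_extRestrict hn hG]
    rfl

lemma extRestrict_inv_apply [Fintype V] (hn : 3 ≤ Fintype.card V) (hG : G ≠ ⊤)
    (φ : ext G ≃g ext G) (v : V) : extRestrict φ⁻¹ (extRestrict φ v) = v := by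
  rw [← extRestrict_mul hn hG, inv_mul_cancel]
  rfl

def extRestrictIso [Fintype V] (hn : 3 ≤ Fintype.card V) (hG : G ≠ ⊤)
    (φ : ext G ≃g ext G) : G ≃g G where
  toFun := extRestrict φ
  invFun := extRestrict φ⁻¹
  left_inv := extRestrict_inv_apply hn hG φ
  right_inv v := by simpa using extRestrict_inv_apply hn hG φ⁻¹ v
  map_rel_iff' {u v} := by
    change G.Adj (extRestrict φ u) (extRestrict φ v) ↔ G.Adj u v
    rw [← ext_adj_inl_inl, inl_extRestrict hn hG, inl_extRestrict hn hG, φ.map_adj_iff,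
      ext_adj_inl_inl]

def extRestrictHom [Fintype V] (hn : 3 ≤ Fintype.card V) (hG : G ≠ ⊤) :
    (ext G ≃g ext G) →* (G ≃g G) :=
  MonoidHom.mk' (extRestrictIso hn hG) fun φ ψ => RelIso.ext (extRestrict_mul hn hG φ ψ)

lemma extRestrictHom_injective [Fintype V] (hn : 3 ≤ Fintype.card V) (hG : G ≠ ⊤) :
    Function.Injective (extRestrictHom hn hG) := by
  intro φ ψ h
  have hres (v : V) : extRestrict φ v = extRestrict ψ v := RelIso.ext_iff.mp h v
  ext (v | v)
  · rw [← inl_extRestrict hn hG, ← inl_extRestrict hn hG, hres]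
  · rw [ext_iso_apply_inr hn hG, ext_iso_apply_inr hn hG, hres]

end

theorem stmt4 {V : Type*} [Fintype V] (G : SimpleGraph V)
    (hn : 3 ≤ Fintype.card V) (hnc : G ≠ ⊤) :
    ∃ f : (ext G ≃g ext G) →* (G ≃g G),
      Function.Injective f ∧
      ∀ (φ : ext G ≃g ext G) (v : V), (Sum.inl ((f φ) v) : V ⊕ V) = φ (Sum.inl v) :=
  ⟨extRestrictHom hn hnc, extRestrictHom_injective hn hnc, inl_extRestrict hn hnc⟩
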